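/- Let U be a bounded subset of R, let g: U^k -> R^n be L-Lipschitz, let A in R^{m x n}, x in R^n, z in R^m, and y = A x + z. Suppose u_hat minimizes ||A g(u) - y|| over u in U^k, and suppose every coordinate of u_hat satisfies |u_hat_i - [u_hat_i]_b| <= 2^{-b} with [u_hat]_b in U^k. Then for every u_tilde in U^k, ||A (g([u_hat]_b) - x) - z|| <= ||A (g(u_tilde) - x) - z|| + 2^{-b} sqrt(k) sigma_max(A) L, where sigma_max(A) denotes the largest singular value of A. -/

import Mathlib

/-- The Euclidean norm of a vector in `ℝ^n`. -/
noncomputable def euclNorm {n : ℕ} (v : Fin n → ℝ) : ℝ := Real.sqrt (∑ i, v i ^ 2)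

/-- The `b`-bit quantization of a real number: `[x]_b = 2^{-b} ⌊2^b x⌋`. -/
noncomputable def quant (b : ℕ) (x : ℝ) : ℝ := (2 : ℝ) ^ (-(b : ℤ)) * ⌊(2 : ℝ) ^ (b : ℕ) * x⌋

/-- The largest singular value of a matrix, i.e. its operator norm with respect to
Euclidean norms. -/
noncomputable def sigmaMax {m n : ℕ} (A : Matrix (Fin m) (Fin n) ℝ) : ℝ :=
  sSup ((fun v => euclNorm (A.mulVec v)) '' {v : Fin n → ℝ | euclNorm v ≤ 1})

open scoped Matrix

lemma euclNorm_eq_norm_toLp {n : ℕ} (v : Fin n → ℝ) : euclNorm v = ‖WithLp.toLp 2 v‖ := by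
  simp [euclNorm, EuclideanSpace.norm_eq]

lemma euclNorm_sub_le_add {n : ℕ} (a b c : Fin n → ℝ) :
    euclNorm (a - c) ≤ euclNorm (a - b) + euclNorm (b - c) := by
  simp only [euclNorm_eq_norm_toLp, WithLp.toLp_sub]
  exact norm_sub_le_norm_sub_add_norm_sub _ _ _

lemma euclNorm_le_mul_sqrt_of_abs_le {n : ℕ} {v : Fin n → ℝ} {c : ℝ} (hc : 0 ≤ c)
    (h : ∀ i, |v i| ≤ c) : euclNorm v ≤ c * √n := by
  have hsum : ∑ i, v i ^ 2 ≤ ∑ _i : Fin n, c ^ 2 :=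
    Finset.sum_le_sum fun i _ => sq_le_sq' (abs_le.mp (h i)).1 (abs_le.mp (h i)).2
  calc euclNorm v ≤ √(∑ _i : Fin n, c ^ 2) := Real.sqrt_le_sqrt hsum
    _ = c * √n := by
      rw [Finset.sum_const, Finset.card_fin, nsmul_eq_mul, Real.sqrt_mul (Nat.cast_nonneg n),
        Real.sqrt_sq hc, mul_comm]

section L2Operator

open scoped Matrix.Norms.L2Operator

lemma sigmaMax_eq_l2_opNorm {m n : ℕ} (A : Matrix (Fin m) (Fin n) ℝ) : sigmaMax A = ‖A‖ := by
  rw [Matrix.l2_opNorm_def, ← ContinuousLinearMap.sSup_unitClosedBall_eq_norm, sigmaMax]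
  congr 1
  ext r
  constructor
  · rintro ⟨v, hv, rfl⟩
    refine ⟨WithLp.toLp 2 v, ?_, ?_⟩
    · simpa [euclNorm_eq_norm_toLp] using hv
    · simp [euclNorm_eq_norm_toLp]
  · rintro ⟨w, hw, rfl⟩
    refine ⟨w.ofLp, ?_, ?_⟩
    · simpa [euclNorm_eq_norm_toLp] using hw
    · exact euclNorm_eq_norm_toLp _

lemma sigmaMax_nonneg {m n : ℕ} (A : Matrix (Fin m) (Fin n) ℝ) : 0 ≤ sigmaMax A :=
  sigmaMax_eq_l2_opNorm A ▸ norm_nonneg A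

lemma euclNorm_mulVec_le {m n : ℕ} (A : Matrix (Fin m) (Fin n) ℝ) (v : Fin n → ℝ) :
    euclNorm (A *ᵥ v) ≤ sigmaMax A * euclNorm v := by
  simpa [sigmaMax_eq_l2_opNorm, euclNorm_eq_norm_toLp] using A.l2_opNorm_mulVec (WithLp.toLp 2 v)

end L2Operator

lemma euclNorm_mulVec_sub_le_of_lipschitz {k m n : ℕ} (A : Matrix (Fin m) (Fin n) ℝ)
    {g : (Fin k → ℝ) → (Fin n → ℝ)} {L : ℝ}
    (hLip : ∀ u v : Fin k → ℝ, euclNorm (g u - g v) ≤ L * euclNorm (u - v)) (u v : Fin k → ℝ) :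
    euclNorm (A *ᵥ g u - A *ᵥ g v) ≤ sigmaMax A * L * euclNorm (u - v) := by
  rw [← Matrix.mulVec_sub, mul_assoc]
  exact (euclNorm_mulVec_le A _).trans
    (mul_le_mul_of_nonneg_left (hLip u v) (sigmaMax_nonneg A))

theorem quantized_minimizer_measurement_error_general
    {m n k : ℕ} (U : Set ℝ)
    (g : (Fin k → ℝ) → (Fin n → ℝ)) (L : ℝ) (hL : 0 ≤ L)
    (hLip : ∀ u v : Fin k → ℝ, euclNorm (g u - g v) ≤ L * euclNorm (u - v))
    (A : Matrix (Fin m) (Fin n) ℝ) (x : Fin n → ℝ) (z y : Fin m → ℝ)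
    (hy : y = A.mulVec x + z)
    (b : ℕ) (uhat : Fin k → ℝ)
    (hmin : ∀ u : Fin k → ℝ, (∀ i, u i ∈ U) →
      euclNorm (A.mulVec (g uhat) - y) ≤ euclNorm (A.mulVec (g u) - y))
    (hquant : ∀ i, |uhat i - quant b (uhat i)| ≤ (2 : ℝ) ^ (-(b : ℤ))) :
    ∀ utilde : Fin k → ℝ, (∀ i, utilde i ∈ U) →
      euclNorm (A.mulVec (g (fun i => quant b (uhat i)) - x) - z)
        ≤ euclNorm (A.mulVec (g utilde - x) - z)
          + (2 : ℝ) ^ (-(b : ℤ)) * Real.sqrt k * sigmaMax A * L := by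
  intro utilde hutilde
  set q : Fin k → ℝ := fun i => quant b (uhat i)
  have residual (w : Fin n → ℝ) : A *ᵥ (w - x) - z = A *ᵥ w - y := by
    rw [hy, Matrix.mulVec_sub]; abel
  have quant_error : euclNorm (q - uhat) ≤ (2 : ℝ) ^ (-(b : ℤ)) * √k :=
    euclNorm_le_mul_sqrt_of_abs_le (by positivity) fun i => by
      rw [Pi.sub_apply, abs_sub_comm]; exact hquant i
  rw [residual, residual]
  calc euclNorm (A *ᵥ g q - y)
      ≤ euclNorm (A *ᵥ g q - A *ᵥ g uhat) + euclNorm (A *ᵥ g uhat - y) :=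
        euclNorm_sub_le_add _ _ _
    _ ≤ sigmaMax A * L * euclNorm (q - uhat) + euclNorm (A *ᵥ g utilde - y) :=
        add_le_add (euclNorm_mulVec_sub_le_of_lipschitz A hLip q uhat) (hmin utilde hutilde)
    _ ≤ sigmaMax A * L * ((2 : ℝ) ^ (-(b : ℤ)) * √k) + euclNorm (A *ᵥ g utilde - y) := by
        gcongr
        exact mul_nonneg (sigmaMax_nonneg A) hL
    _ = euclNorm (A *ᵥ g utilde - y) + (2 : ℝ) ^ (-(b : ℤ)) * √k * sigmaMax A * L := by ring

/-- If `û` minimizes `‖A g(u) - y‖` over `u ∈ U^k`, where `y = A x + z`, `g` is `L`-Lipschitz,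
every coordinate of `û` is within `2^{-b}` of its `b`-bit quantization, and `[û]_b ∈ U^k`,
then for every `ũ ∈ U^k`,
`‖A(g([û]_b) - x) - z‖ ≤ ‖A(g(ũ) - x) - z‖ + 2^{-b} √k σ_max(A) L`. -/
theorem quantized_minimizer_measurement_error
    {m n k : ℕ} (U : Set ℝ) (hU : Bornology.IsBounded U)
    (g : (Fin k → ℝ) → (Fin n → ℝ)) (L : ℝ) (hL : 0 ≤ L)
    (hLip : ∀ u v : Fin k → ℝ, euclNorm (g u - g v) ≤ L * euclNorm (u - v))
    (A : Matrix (Fin m) (Fin n) ℝ) (x : Fin n → ℝ) (z y : Fin m → ℝ)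
    (hy : y = A.mulVec x + z)
    (b : ℕ) (uhat : Fin k → ℝ) (huhat : ∀ i, uhat i ∈ U)
    (hmin : ∀ u : Fin k → ℝ, (∀ i, u i ∈ U) →
      euclNorm (A.mulVec (g uhat) - y) ≤ euclNorm (A.mulVec (g u) - y))
    (hquant : ∀ i, |uhat i - quant b (uhat i)| ≤ (2 : ℝ) ^ (-(b : ℤ)))
    (hquantU : ∀ i, quant b (uhat i) ∈ U) :
    ∀ utilde : Fin k → ℝ, (∀ i, utilde i ∈ U) →
      euclNorm (A.mulVec (g (fun i => quant b (uhat i)) - x) - z)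
        ≤ euclNorm (A.mulVec (g utilde - x) - z)
          + (2 : ℝ) ^ (-(b : ℤ)) * Real.sqrt k * sigmaMax A * L :=
  quantized_minimizer_measurement_error_general U g L hL hLip A x z y hy b uhat hmin hquant
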